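/- arXiv:2210.17466 — 7 statements merged into one kernel-verified Lean document; each statement's English description precedes it below -/
import Mathlib

section
/- Under the stated assumptions, for all sufficiently large N one has (1/N)·#{n ≤ N : g_n ≤ 1/2} ≤ 2√ε. -/
/-!
Put `x n := M - g n ≥ 0` with `M = 3/2 + ε`. Consecutive pairs `(n, n + 1)` are among the pairs
counted by the pair correlation, so PPC applied to `(M - t, M]` gives
`#{n ≤ N : x n < t} ≤ (t + o(1)) N`: the empirical distribution of `x` dominates the uniform
distribution on `[0, 1]`. Its mean is `M - 1 + o(1) = 1/2 + ε + o(1)` by the average-gap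
hypothesis. A fraction `s` of gaps `g n ≤ 1/2`, i.e. `x n ≥ 1 + ε`, raises the mean of such a
distribution above `1/2` by about `s² / 2` (layer-cake formula), so `s ≲ √(2ε)`. To use only
finitely many intervals, the layer-cake integral is replaced by a Riemann sum of mesh `h`.
-/

open Finset Filter Topology

section

open scoped Classical

variable {α : Type*}

noncomputable def pairCount (lam : ℕ → ℝ) (I : Set ℝ) (N : ℕ) : ℕ :=
  #((Icc 1 N ×ˢ Icc 1 N).filter (fun p => p.1 ≠ p.2 ∧ lam p.2 - lam p.1 ∈ I))

def HasPoissonPairCorrelations (lam : ℕ → ℝ) : Prop :=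
  ∀ I : Set ℝ, I.OrdConnected → Bornology.IsBounded I →
    Tendsto (fun N : ℕ => (pairCount lam I N : ℝ) / N) atTop (𝓝 (MeasureTheory.volume I).toReal)

theorem card_gap_mem_le_pairCount_add_one (lam : ℕ → ℝ) (I : Set ℝ) (N : ℕ) :
    #{n ∈ Icc 1 N | lam (n + 1) - lam n ∈ I} ≤ pairCount lam I N + 1 := by
  calc #{n ∈ Icc 1 N | lam (n + 1) - lam n ∈ I}
      ≤ #(insert N {n ∈ Icc 1 (N - 1) | lam (n + 1) - lam n ∈ I}) := by
        refine card_le_card fun n hn => ?_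
        simp only [mem_filter, mem_Icc, mem_insert] at hn ⊢
        rcases eq_or_ne n N with rfl | hne
        · exact Or.inl rfl
        · exact Or.inr ⟨⟨hn.1.1, by omega⟩, hn.2⟩
    _ ≤ #{n ∈ Icc 1 (N - 1) | lam (n + 1) - lam n ∈ I} + 1 := card_insert_le _ _
    _ ≤ pairCount lam I N + 1 := by
        gcongr
        refine card_le_card_of_injOn (fun n => (n, n + 1)) (fun n hn => ?_)
          (fun a _ b _ hab => congrArg Prod.fst hab)
        simp only [coe_filter, mem_product, mem_Icc, Set.mem_ofPred_eq] at hn ⊢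
        refine ⟨⟨⟨hn.1.1, ?_⟩, ?_, ?_⟩, ?_, hn.2⟩ <;> omega

theorem eventually_card_gap_mem_le {lam : ℕ → ℝ} {I : Set ℝ} {v δ : ℝ}
    (hI : Tendsto (fun N : ℕ => (pairCount lam I N : ℝ) / N) atTop (𝓝 v)) (hδ : 0 < δ) :
    ∀ᶠ N : ℕ in atTop, (#{n ∈ Icc 1 N | lam (n + 1) - lam n ∈ I} : ℝ) ≤ (v + δ) * N := by
  filter_upwards [hI.eventually_lt_const (lt_add_of_pos_right v (half_pos hδ)),
    eventually_ge_atTop ⌈2 / δ⌉₊, eventually_gt_atTop 0] with N hlt hNδ hN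
  rw [div_lt_iff₀ (by exact_mod_cast hN)] at hlt
  have hδN : 2 ≤ δ * N := by
    have := Nat.ceil_le.mp hNδ
    rwa [div_le_iff₀ hδ, mul_comm] at this
  calc (#{n ∈ Icc 1 N | lam (n + 1) - lam n ∈ I} : ℝ) ≤ pairCount lam I N + 1 := by
        exact_mod_cast card_gap_mem_le_pairCount_add_one lam I N
    _ ≤ (v + δ) * N := by linarith

theorem eventually_card_sub_gap_lt_le {lam : ℕ → ℝ} (hppc : HasPoissonPairCorrelations lam)
    {M t δ : ℝ} (hgap : ∀ n, 1 ≤ n → lam (n + 1) - lam n ≤ M) (ht : 0 ≤ t) (hδ : 0 < δ) :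
    ∀ᶠ N : ℕ in atTop, (#{n ∈ Icc 1 N | M - (lam (n + 1) - lam n) < t} : ℝ) ≤ (t + δ) * N := by
  have hI := hppc (Set.Ioc (M - t) M) Set.ordConnected_Ioc (Metric.isBounded_Ioc _ _)
  rw [Real.volume_Ioc, sub_sub_cancel, ENNReal.toReal_ofReal ht] at hI
  refine (eventually_card_gap_mem_le hI hδ).mono fun N hN => le_trans ?_ hN
  gcongr with n hn
  exact fun hlt => ⟨by linarith, hgap n (mem_Icc.mp hn).1⟩

theorem eventually_sum_sub_le {g : ℕ → ℝ} {a : ℝ}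
    (havg : Tendsto (fun N : ℕ => (∑ n ∈ Icc 1 N, g n) / N) atTop (𝓝 a)) (M : ℝ) {δ : ℝ}
    (hδ : 0 < δ) : ∀ᶠ N : ℕ in atTop, ∑ n ∈ Icc 1 N, (M - g n) ≤ (M - a + δ) * N := by
  filter_upwards [havg.eventually_const_lt (sub_lt_self a hδ), eventually_gt_atTop 0]
    with N hlt hN
  rw [lt_div_iff₀ (by exact_mod_cast hN)] at hlt
  rw [sum_sub_distrib, sum_const, Nat.card_Icc, add_tsub_cancel_right, nsmul_eq_mul]
  linarith

theorem layer_count_le {x h c : ℝ} {K : ℕ} (hx : 0 ≤ x) (hh : 0 < h) :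
    h * #((Icc 1 K).filter fun j : ℕ => j * h ≤ x) + (c - K * h) * (if c ≤ x then 1 else 0)
      ≤ x := by
  split_ifs with hcx
  · have : (#((Icc 1 K).filter fun j : ℕ => j * h ≤ x) : ℝ) ≤ K := by
      exact_mod_cast (card_filter_le _ _).trans (Nat.card_Icc 1 K).le
    nlinarith
  · have hsub : (Icc 1 K).filter (fun j : ℕ => j * h ≤ x) ⊆ Icc 1 ⌊x / h⌋₊ := fun j hj => by
      simp only [mem_filter, mem_Icc] at hj ⊢
      exact ⟨hj.1.1, Nat.le_floor ((le_div_iff₀ hh).mpr hj.2)⟩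
    have : (#((Icc 1 K).filter fun j : ℕ => j * h ≤ x) : ℝ) ≤ x / h := by
      calc (#((Icc 1 K).filter fun j : ℕ => j * h ≤ x) : ℝ) ≤ ⌊x / h⌋₊ := by
            exact_mod_cast (card_le_card hsub).trans (Nat.card_Icc 1 _).le
        _ ≤ x / h := Nat.floor_le (div_nonneg hx hh.le)
    rw [le_div_iff₀ hh] at this
    linarith

theorem sum_layer_count_le_sum {A : Finset α} {x : α → ℝ} {h : ℝ} (c : ℝ) (K : ℕ)
    (hx : ∀ n ∈ A, 0 ≤ x n) (hh : 0 < h) :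
    h * ∑ j ∈ Icc 1 K, (#{n ∈ A | j * h ≤ x n} : ℝ) + (c - K * h) * #{n ∈ A | c ≤ x n}
      ≤ ∑ n ∈ A, x n := by
  simp only [natCast_card_filter, mul_sum]
  rw [sum_comm, ← sum_add_distrib]
  refine sum_le_sum fun n hn => ?_
  simpa only [natCast_card_filter, mul_sum] using layer_count_le (c := c) (K := K) (hx n hn) hh

theorem sum_Icc_natCast_id (K : ℕ) : ∑ j ∈ Icc 1 K, (j : ℝ) = K * (K + 1) / 2 := by
  induction K with
  | zero => simp
  | succ K ih =>
    rw [sum_Icc_succ_top (by omega), ih]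
    push_cast
    ring

theorem le_sum_of_card_lt_le {A : Finset α} {x : α → ℝ} {h c δ : ℝ} {K : ℕ}
    (hx : ∀ n ∈ A, 0 ≤ x n) (hh : 0 < h)
    (hcount : ∀ j ∈ Icc 1 K, (#{n ∈ A | x n < j * h} : ℝ) ≤ (j * h + δ) * #A) :
    (c - K * h) * #{n ∈ A | c ≤ x n} + (K * h * (1 - δ) - h ^ 2 * (K * (K + 1) / 2)) * #A
      ≤ ∑ n ∈ A, x n := by
  have hlevel : ∀ j ∈ Icc 1 K, (1 - δ - j * h) * #A ≤ (#{n ∈ A | j * h ≤ x n} : ℝ) := by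
    intro j hj
    have hsplit := card_filter_add_card_filter_not (s := A) (fun n => j * h ≤ x n)
    simp only [not_le] at hsplit
    have := hcount j hj
    rw [← hsplit] at this ⊢
    push_cast at this ⊢
    linarith
  have hlayers := sum_le_sum hlevel
  rw [← sum_mul, sum_sub_distrib, ← sum_mul, sum_Icc_natCast_id, sum_const, Nat.card_Icc,
    add_tsub_cancel_right, nsmul_eq_mul] at hlayers
  calc (c - K * h) * #{n ∈ A | c ≤ x n} + (K * h * (1 - δ) - h ^ 2 * (K * (K + 1) / 2)) * #A
      = h * ((K * (1 - δ) - K * (K + 1) / 2 * h) * #A) + (c - K * h) * #{n ∈ A | c ≤ x n} := by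
        ring
    _ ≤ h * ∑ j ∈ Icc 1 K, (#{n ∈ A | j * h ≤ x n} : ℝ) + (c - K * h) * #{n ∈ A | c ≤ x n} := by
        gcongr
    _ ≤ ∑ n ∈ A, x n := sum_layer_count_le_sum c K hx hh

end

open scoped Classical in
theorem stmt_1_general (lam : ℕ → ℝ) (g : ℕ → ℝ) (hgdef : ∀ n, g n = lam (n + 1) - lam n)
    (havg : Tendsto (fun N : ℕ => (∑ n ∈ Finset.Icc 1 N, g n) / N) atTop (nhds 1))
    (hppc : ∀ I : Set ℝ, I.OrdConnected → Bornology.IsBounded I →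
      Tendsto (fun N : ℕ =>
          (((Finset.Icc 1 N ×ˢ Finset.Icc 1 N).filter
            (fun p => p.1 ≠ p.2 ∧ lam p.2 - lam p.1 ∈ I)).card : ℝ) / N)
        atTop (nhds (MeasureTheory.volume I).toReal))
    (ε : ℝ) (hε : ε = 1 / 10 ^ 9)
    (hgap : ∀ n, 1 ≤ n → g n ≤ 3 / 2 + ε) :
    ∀ᶠ N : ℕ in atTop,
      (((Finset.Icc 1 N).filter (fun n => g n ≤ 1 / 2)).card : ℝ) / N
        ≤ 2 * Real.sqrt ε := by
  obtain rfl : g = fun n => lam (n + 1) - lam n := funext hgdef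
  subst hε
  set M : ℝ := 3 / 2 + 1 / 10 ^ 9
  -- `K * h = 1 - 5·10⁻⁵`, close to the optimal truncation `1 - √(2ε)` of the layer-cake sum
  set h : ℝ := 1 / 10 ^ 10
  set K : ℕ := 9999500000
  set δ : ℝ := 1 / 10 ^ 11
  have hlayers : ∀ᶠ N : ℕ in atTop, ∀ j ∈ Icc 1 K,
      (#{n ∈ Icc 1 N | M - (lam (n + 1) - lam n) < j * h} : ℝ) ≤ (j * h + δ) * #(Icc 1 N) := by
    refine (eventually_all_finset _).2 fun j _ => ?_
    simpa only [Nat.card_Icc, add_tsub_cancel_right] using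
      eventually_card_sub_gap_lt_le hppc hgap (by positivity) (by positivity : 0 < δ)
  filter_upwards [hlayers, eventually_sum_sub_le havg M (by positivity : 0 < δ),
    eventually_gt_atTop 0] with N hcount hsum hN
  have key := le_sum_of_card_lt_le (c := 1 + 1 / 10 ^ 9)
    (fun n hn => sub_nonneg.2 (hgap n (mem_Icc.1 hn).1)) (by positivity : 0 < h) hcount
  have hsmall : {n ∈ Icc 1 N | 1 + 1 / 10 ^ 9 ≤ M - (lam (n + 1) - lam n)} =
      {n ∈ Icc 1 N | lam (n + 1) - lam n ≤ 1 / 2} :=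
    filter_congr fun n _ => by constructor <;> intro <;> linarith
  rw [hsmall, Nat.card_Icc, add_tsub_cancel_right] at key
  have hsqrt : (316 / 10 ^ 7 : ℝ) ≤ Real.sqrt (1 / 10 ^ 9) := Real.le_sqrt_of_sq_le (by norm_num)
  rw [div_le_iff₀ (by exact_mod_cast hN)]
  beta_reduce
  generalize (#{n ∈ Icc 1 N | lam (n + 1) - lam n ≤ 1 / 2} : ℝ) = S at key ⊢
  generalize ∑ n ∈ Icc 1 N, (M - (lam (n + 1) - lam n)) = T at key hsum
  norm_num [M, h, K, δ] at key hsum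
  nlinarith

open scoped Classical in
/-- Let `(λ_n)` be strictly increasing with average gap `1` and Poisson pair correlations,
let `ε = 10⁻⁹`, and suppose `g n := λ_{n+1} − λ_n ≤ 3/2 + ε` for all `n ≥ 1`. Then for all
sufficiently large `N`, `(1/N)·#{n ≤ N : g n ≤ 1/2} ≤ 2√ε`. -/
theorem stmt_1 (lam : ℕ → ℝ) (g : ℕ → ℝ) (hgdef : ∀ n, g n = lam (n + 1) - lam n)
    (hmono : ∀ n, 1 ≤ n → lam n < lam (n + 1))
    (havg : Tendsto (fun N : ℕ => (∑ n ∈ Finset.Icc 1 N, g n) / N) atTop (nhds 1))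
    (hppc : ∀ I : Set ℝ, I.OrdConnected → Bornology.IsBounded I →
      Tendsto (fun N : ℕ =>
          (((Finset.Icc 1 N ×ˢ Finset.Icc 1 N).filter
            (fun p => p.1 ≠ p.2 ∧ lam p.2 - lam p.1 ∈ I)).card : ℝ) / N)
        atTop (nhds (MeasureTheory.volume I).toReal))
    (ε : ℝ) (hε : ε = 1 / 10 ^ 9)
    (hgap : ∀ n, 1 ≤ n → g n ≤ 3 / 2 + ε) :
    ∀ᶠ N : ℕ in atTop,
      (((Finset.Icc 1 N).filter (fun n => g n ≤ 1 / 2)).card : ℝ) / N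
        ≤ 2 * Real.sqrt ε :=
  stmt_1_general lam g hgdef havg hppc ε hε hgap
end

section
/- For all positive integers a, b, c, L satisfying 1 ≤ a ≤ b ≤ c ≤ L, one has (a−1)a + (b−a)(b−a+1) + (c−b)(c−b+1) + (L−c)(L−c+1) + (a−1)(b−a) + (b−a)(c−b) + (c−b)(L−c) ≥ (5/12)L² + (1/6)L − 7/12. -/
/-- For all positive integers `a, b, c, L` satisfying `1 ≤ a ≤ b ≤ c ≤ L`, one has
`(a−1)a + (b−a)(b−a+1) + (c−b)(c−b+1) + (L−c)(L−c+1)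
  + (a−1)(b−a) + (b−a)(c−b) + (c−b)(L−c) ≥ (5/12)L² + (1/6)L − 7/12`. -/
theorem stmt_3 (a b c L : ℕ) (ha : 1 ≤ a) (hab : a ≤ b) (hbc : b ≤ c) (hcL : c ≤ L) :
    ((a : ℝ) - 1) * a + ((b : ℝ) - a) * ((b : ℝ) - a + 1) + ((c : ℝ) - b) * ((c : ℝ) - b + 1)
      + ((L : ℝ) - c) * ((L : ℝ) - c + 1)
      + ((a : ℝ) - 1) * ((b : ℝ) - a) + ((b : ℝ) - a) * ((c : ℝ) - b)
      + ((c : ℝ) - b) * ((L : ℝ) - c)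
    ≥ 5 / 12 * (L : ℝ) ^ 2 + 1 / 6 * (L : ℝ) - 7 / 12 := by
  have h1 : (1:ℝ) ≤ a := by exact_mod_cast ha
  have h2 : (a:ℝ) ≤ b := by exact_mod_cast hab
  have h3 : (b:ℝ) ≤ c := by exact_mod_cast hbc
  have h4 : (c:ℝ) ≤ L := by exact_mod_cast hcL
  nlinarith [sq_nonneg ((a:ℝ) - 1 - ((L:ℝ) - c)), sq_nonneg ((b:ℝ) - a - ((c:ℝ) - b)),
    sq_nonneg ((a:ℝ) - 1 - 2*((b:ℝ) - a)), sq_nonneg ((L:ℝ) - c - 2*((c:ℝ) - b)),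
    sq_nonneg ((a:ℝ) - 1 + (L:ℝ) - c - 2*((b:ℝ) - a) - 2*((c:ℝ) - b)),
    mul_nonneg (sub_nonneg.2 h2) (sub_nonneg.2 h3)]
end

section
/- For every integer L ≥ 1 and all real numbers a, b, c satisfying 1 ≤ a ≤ b ≤ c ≤ L, one has (a−1)a + (b−a)(b−a+1) + (c−b)(c−b+1) + (L−c)(L−c+1) + (a−1)(b−a) + (b−a)(c−b) + (c−b)(L−c) ≥ (5/12)L² + (1/6)L − 7/12. -/
/-- For every integer `L ≥ 1` and all real numbers `a, b, c` satisfying `1 ≤ a ≤ b ≤ c ≤ L`,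
one has `(a−1)a + (b−a)(b−a+1) + (c−b)(c−b+1) + (L−c)(L−c+1)
  + (a−1)(b−a) + (b−a)(c−b) + (c−b)(L−c) ≥ (5/12)L² + (1/6)L − 7/12`. -/
theorem stmt_4 (L : ℕ) (hL : 1 ≤ L) (a b c : ℝ) (ha : 1 ≤ a) (hab : a ≤ b) (hbc : b ≤ c)
    (hcL : c ≤ (L : ℝ)) :
    (a - 1) * a + (b - a) * (b - a + 1) + (c - b) * (c - b + 1)
      + ((L : ℝ) - c) * ((L : ℝ) - c + 1)
      + (a - 1) * (b - a) + (b - a) * (c - b) + (c - b) * ((L : ℝ) - c)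
    ≥ 5 / 12 * (L : ℝ) ^ 2 + 1 / 6 * (L : ℝ) - 7 / 12 := by
  nlinarith [sq_nonneg (7*(a-1) + (b-a) - 5*(c-b) - 5*((L:ℝ)-c)),
    sq_nonneg (8*(b-a) + 2*(c-b) - 5*((L:ℝ)-c)),
    sq_nonneg (2*(c-b) - ((L:ℝ)-c))]
end

section
/- Let L ≥ 1 be a positive integer and let g_1, …, g_L be positive real numbers with ∑_{i=1}^L g_i ≤ 1/2. Then ∑_{n≤L} ∑_{m≤L−n+1} 1[g_n + ⋯ + g_{n+m−1} ≤ 1/4] + ∑_{n≤L} ∑_{m≤L−n+1} 1[g_n + ⋯ + g_{n+m−1} ≤ 1/8] ≥ (5/6)·binom(L+1, 2) − (5/6)·L, where 1[·] is the indicator of the stated event and binom(L+1,2) = L(L+1)/2. -/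
open Finset

private lemma ind_le3 {p1 p2 p3 q : Prop} [Decidable p1] [Decidable p2] [Decidable p3]
    [Decidable q] (h1 : p1 → q) (h2 : p2 → q) (h3 : p3 → q)
    (h12 : ¬(p1 ∧ p2)) (h13 : ¬(p1 ∧ p3)) (h23 : ¬(p2 ∧ p3)) :
    (if p1 then (1:ℝ) else 0) + (if p2 then (1:ℝ) else 0) + (if p3 then (1:ℝ) else 0)
      ≤ (if q then (1:ℝ) else 0) := by
  by_cases hp1 : p1
  · rw [if_pos hp1, if_neg (fun h => h12 ⟨hp1, h⟩), if_neg (fun h => h13 ⟨hp1, h⟩),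
      if_pos (h1 hp1)]
    norm_num
  · rw [if_neg hp1]
    by_cases hp2 : p2
    · rw [if_pos hp2, if_neg (fun h => h23 ⟨hp2, h⟩), if_pos (h2 hp2)]
      norm_num
    · rw [if_neg hp2]
      by_cases hp3 : p3
      · rw [if_pos hp3, if_pos (h3 hp3)]
        norm_num
      · rw [if_neg hp3]
        split_ifs <;> norm_num

private lemma ind_le4 {p1 p2 p3 p4 q : Prop} [Decidable p1] [Decidable p2] [Decidable p3]
    [Decidable p4] [Decidable q]
    (h1 : p1 → q) (h2 : p2 → q) (h3 : p3 → q) (h4 : p4 → q)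
    (h12 : ¬(p1 ∧ p2)) (h13 : ¬(p1 ∧ p3)) (h14 : ¬(p1 ∧ p4))
    (h23 : ¬(p2 ∧ p3)) (h24 : ¬(p2 ∧ p4)) (h34 : ¬(p3 ∧ p4)) :
    (if p1 then (1:ℝ) else 0) + (if p2 then (1:ℝ) else 0) + (if p3 then (1:ℝ) else 0)
      + (if p4 then (1:ℝ) else 0) ≤ (if q then (1:ℝ) else 0) := by
  by_cases hp1 : p1
  · rw [if_pos hp1, if_neg (fun h => h12 ⟨hp1, h⟩), if_neg (fun h => h13 ⟨hp1, h⟩),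
      if_neg (fun h => h14 ⟨hp1, h⟩), if_pos (h1 hp1)]
    norm_num
  · rw [if_neg hp1]
    by_cases hp2 : p2
    · rw [if_pos hp2, if_neg (fun h => h23 ⟨hp2, h⟩), if_neg (fun h => h24 ⟨hp2, h⟩),
        if_pos (h2 hp2)]
      norm_num
    · rw [if_neg hp2]
      by_cases hp3 : p3
      · rw [if_pos hp3, if_neg (fun h => h34 ⟨hp3, h⟩), if_pos (h3 hp3)]
        norm_num
      · rw [if_neg hp3]
        by_cases hp4 : p4
        · rw [if_pos hp4, if_pos (h4 hp4)]
          norm_num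
        · rw [if_neg hp4]
          split_ifs <;> norm_num

private lemma char_lemma {L : ℕ} {G : ℕ → ℝ}
    (hmono : ∀ x y : ℕ, x ≤ y → y ≤ L → G x ≤ G y) (t : ℝ) {x : ℕ} (hx : x ≤ L) :
    (x < ((range (L+1)).filter (fun z => G z ≤ t)).card ↔ G x ≤ t) := by
  constructor
  · intro h
    by_contra hc
    have hsub : (range (L+1)).filter (fun z => G z ≤ t) ⊆ range x := by
      intro z hz
      simp only [mem_filter, mem_range] at hz ⊢
      by_contra hzx
      push_neg at hzx
      exact hc (le_trans (hmono x z hzx (by omega)) hz.2)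
    have := card_le_card hsub
    rw [card_range] at this
    omega
  · intro h
    have hsub : range (x+1) ⊆ (range (L+1)).filter (fun z => G z ≤ t) := by
      intro z hz
      simp only [mem_range] at hz
      simp only [mem_filter, mem_range]
      exact ⟨by omega, le_trans (hmono z x (by omega) hx) h⟩
    have := card_le_card hsub
    rw [card_range] at this
    omega

private lemma pair_count (L u w : ℕ) (huw : u + w ≤ L + 1) :
    ∑ x ∈ range L, ∑ y ∈ Icc (x+1) L, (if u ≤ x ∧ y < u + w then (1:ℝ) else 0)
      = (w:ℝ) * ((w:ℝ) - 1) / 2 := by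
  have hinner : ∀ x ∈ range L,
      (∑ y ∈ Icc (x+1) L, if u ≤ x ∧ y < u + w then (1:ℝ) else 0)
        = if u ≤ x then ((u + w - (x+1) : ℕ) : ℝ) else 0 := by
    intro x hx
    by_cases hux : u ≤ x
    · simp only [hux, true_and, if_true]
      rw [Finset.sum_boole]
      have hfil : (Icc (x+1) L).filter (fun y => y < u + w) = Icc (x+1) (u + w - 1) := by
        ext z
        simp only [mem_filter, mem_Icc]
        omega
      rw [hfil, Nat.card_Icc]
      congr 1
      omega
    · simp only [hux, false_and, if_false]
      simp
  rw [Finset.sum_congr rfl hinner, ← Finset.sum_filter]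
  have hfil2 : (range L).filter (fun x => u ≤ x) = Ico u L := by
    ext z
    simp only [mem_filter, mem_range, mem_Ico]
    omega
  rw [hfil2, ← Nat.cast_sum]
  have hnat : (∑ x ∈ Ico u L, (u + w - (x+1))) * 2 = w * (w - 1) := by
    rw [Finset.sum_Ico_eq_sum_range]
    have hc : ∀ k ∈ range (L - u), (u + w - (u + k + 1)) = w - 1 - k := by
      intro k hk
      omega
    rw [Finset.sum_congr rfl hc]
    have hsplit : ∑ k ∈ range (L - u), (w - 1 - k) = ∑ k ∈ range w, (w - 1 - k) := by
      rcases le_total w (L - u) with h | h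
      · exact (Finset.sum_subset (Finset.range_subset_range.2 h)
          (fun k _ hk => by simp only [mem_range] at hk; omega)).symm
      · exact Finset.sum_subset (Finset.range_subset_range.2 h)
          (fun k _ hk => by simp only [mem_range] at hk; omega)
    rw [hsplit, Finset.sum_range_reflect (fun j => j) w, Finset.sum_range_id_mul_two]
  have hcast := congrArg (fun n : ℕ => (n : ℝ)) hnat
  simp only [Nat.cast_mul, Nat.cast_ofNat] at hcast
  rcases Nat.eq_zero_or_pos w with hw | hw
  · subst hw
    simp at hcast ⊢
    linarith
  · have : ((w - 1 : ℕ) : ℝ) = (w : ℝ) - 1 := by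
      rw [Nat.cast_sub hw]
      norm_num
    rw [this] at hcast
    linarith

private lemma cross_count (L b n1 n2 : ℕ) (hbL : b + n1 + n2 ≤ L + 1) :
    (n1 : ℝ) * (n2 : ℝ)
      ≤ ∑ x ∈ range L, ∑ y ∈ Icc (x+1) L,
          (if b ≤ x ∧ x < b + n1 ∧ b + n1 ≤ y ∧ y < b + n1 + n2 then (1:ℝ) else 0) := by
  rcases Nat.eq_zero_or_pos n2 with h2 | h2
  · subst h2
    simp only [Nat.cast_zero, mul_zero]
    refine Finset.sum_nonneg fun x _ => Finset.sum_nonneg fun y _ => ?_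
    positivity
  · have hinner : ∀ x ∈ range L,
        (if b ≤ x ∧ x < b + n1 then ((n2 : ℕ) : ℝ) else 0)
          ≤ ∑ y ∈ Icc (x+1) L,
              (if b ≤ x ∧ x < b + n1 ∧ b + n1 ≤ y ∧ y < b + n1 + n2 then (1:ℝ) else 0) := by
      intro x hx
      by_cases hbx : b ≤ x ∧ x < b + n1
      · rw [if_pos hbx]
        have hco : ∀ y, (b ≤ x ∧ x < b + n1 ∧ b + n1 ≤ y ∧ y < b + n1 + n2)
            ↔ (b + n1 ≤ y ∧ y < b + n1 + n2) := by
          intro y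
          constructor
          · rintro ⟨-, -, h⟩; exact h
          · intro h; exact ⟨hbx.1, hbx.2, h⟩
        simp only [hco]
        rw [Finset.sum_boole]
        have hfil : (Icc (x+1) L).filter (fun y => b + n1 ≤ y ∧ y < b + n1 + n2)
            = Icc (b + n1) (b + n1 + n2 - 1) := by
          ext z
          simp only [mem_filter, mem_Icc]
          omega
        rw [hfil, Nat.card_Icc]
        have : b + n1 + n2 - 1 + 1 - (b + n1) = n2 := by omega
        rw [this]
      · rw [if_neg hbx]
        refine Finset.sum_nonneg fun y _ => ?_
        positivity
    calc (n1 : ℝ) * n2 = ∑ x ∈ range L, (if b ≤ x ∧ x < b + n1 then ((n2:ℕ) : ℝ) else 0) := by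
          rw [← Finset.sum_filter]
          have hfil2 : (range L).filter (fun x => b ≤ x ∧ x < b + n1) = Ico b (b + n1) := by
            ext z
            simp only [mem_filter, mem_range, mem_Ico]
            omega
          rw [hfil2, Finset.sum_const, Nat.card_Ico]
          have : b + n1 - b = n1 := by omega
          rw [this]
          simp [mul_comm]
      _ ≤ _ := Finset.sum_le_sum hinner

set_option maxHeartbeats 1000000 in
private lemma block_ineq (n0 n1 n2 n3 : ℕ) (h2 : 2 ≤ n0 + n1 + n2 + n3) :
    5 * ((n0:ℝ) + n1 + n2 + n3 - 1) * ((n0:ℝ) + n1 + n2 + n3 - 2) / 12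
      ≤ (n0:ℝ) * ((n0:ℝ) - 1) / 2 + (n1:ℝ) * ((n1:ℝ) - 1) / 2 + (n2:ℝ) * ((n2:ℝ) - 1) / 2
        + (n3:ℝ) * ((n3:ℝ) - 1) / 2
        + ((n0:ℝ) + n1) * ((n0:ℝ) + n1 - 1) / 2 + ((n2:ℝ) + n3) * ((n2:ℝ) + n3 - 1) / 2
        + (n1:ℝ) * n2 := by
  by_cases h4 : 4 ≤ n0 + n1 + n2 + n3
  · have h4' : (4:ℝ) ≤ (n0:ℝ) + n1 + n2 + n3 := by exact_mod_cast h4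
    nlinarith [sq_nonneg ((n0:ℝ) - n3),
      sq_nonneg (3*((n0:ℝ) + n3) - 2*((n0:ℝ) + n1 + n2 + n3)),
      sq_nonneg ((n0:ℝ) + n1 - (n2:ℝ) - n3)]
  · push_neg at h4
    have hb0 : n0 ≤ 3 := by omega
    have hb1 : n1 ≤ 3 := by omega
    have hb2 : n2 ≤ 3 := by omega
    have hb3 : n3 ≤ 3 := by omega
    interval_cases n0 <;> interval_cases n1 <;> interval_cases n2 <;> interval_cases n3 <;>
      (try norm_num) <;> omega

set_option maxHeartbeats 1000000 in
/-- Let `L ≥ 1` and let `g 1, …, g L` be positive reals with `∑_{i=1}^L g i ≤ 1/2`. Then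
`∑_{n≤L} ∑_{m≤L−n+1} 1[g_n + ⋯ + g_{n+m−1} ≤ 1/4]
  + ∑_{n≤L} ∑_{m≤L−n+1} 1[g_n + ⋯ + g_{n+m−1} ≤ 1/8] ≥ (5/6)·C(L+1,2) − (5/6)·L`. -/
theorem stmt_5 (L : ℕ) (hL : 1 ≤ L) (g : ℕ → ℝ)
    (hg : ∀ i ∈ Finset.Icc 1 L, 0 < g i)
    (hsum : ∑ i ∈ Finset.Icc 1 L, g i ≤ 1 / 2) :
    (∑ n ∈ Finset.Icc 1 L, ∑ m ∈ Finset.Icc 1 (L - n + 1),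
        (if (∑ i ∈ Finset.Icc n (n + m - 1), g i) ≤ 1 / 4 then (1 : ℝ) else 0))
      + (∑ n ∈ Finset.Icc 1 L, ∑ m ∈ Finset.Icc 1 (L - n + 1),
        (if (∑ i ∈ Finset.Icc n (n + m - 1), g i) ≤ 1 / 8 then (1 : ℝ) else 0))
    ≥ 5 / 6 * ((L + 1).choose 2 : ℝ) - 5 / 6 * (L : ℝ) := by
  classical
  set G : ℕ → ℝ := fun r => ∑ i ∈ Icc 1 r, g i with hGdef
  have hIoc : ∀ r : ℕ, G r = ∑ i ∈ Ioc 0 r, g i := by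
    intro r
    simp only [hGdef]
    exact Finset.sum_congr (Finset.Icc_add_one_left_eq_Ioc 0 r) (fun _ _ => rfl)
  have hGmono : ∀ x y : ℕ, x ≤ y → y ≤ L → G x ≤ G y := by
    intro x y hxy hyL
    have hsplit := Finset.sum_Ioc_consecutive g (Nat.zero_le x) hxy
    have hpos : 0 ≤ ∑ i ∈ Ioc x y, g i := by
      refine Finset.sum_nonneg fun i hi => ?_
      rw [mem_Ioc] at hi
      exact le_of_lt (hg i (mem_Icc.2 ⟨by omega, le_trans hi.2 hyL⟩))
    rw [hIoc x, hIoc y]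
    linarith
  have hG0 : G 0 = 0 := by simp [hGdef]
  have hGnonneg : ∀ x : ℕ, x ≤ L → 0 ≤ G x := by
    intro x hx
    have := hGmono 0 x (Nat.zero_le x) hx
    rw [hG0] at this
    exact this
  have hGL : G L ≤ 1 / 2 := by
    simp only [hGdef]
    exact hsum
  have hwin : ∀ x y : ℕ, x ≤ y → (∑ i ∈ Icc (x+1) y, g i) = G y - G x := by
    intro x y hxy
    have hsplit := Finset.sum_Ioc_consecutive g (Nat.zero_le x) hxy
    rw [Finset.Icc_add_one_left_eq_Ioc, hIoc x, hIoc y]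
    linarith
  have hre : ∀ c : ℝ, (∑ n ∈ Finset.Icc 1 L, ∑ m ∈ Finset.Icc 1 (L - n + 1),
        (if (∑ i ∈ Finset.Icc n (n + m - 1), g i) ≤ c then (1 : ℝ) else 0))
      = ∑ x ∈ range L, ∑ y ∈ Icc (x+1) L, (if G y - G x ≤ c then (1:ℝ) else 0) := by
    intro c
    refine Finset.sum_nbij' (fun n => n - 1) (fun x => x + 1) ?_ ?_ ?_ ?_ ?_
    · intro n hn
      simp only [mem_Icc] at hn
      simp only [mem_range]
      omega
    · intro x hx
      simp only [mem_range] at hx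
      simp only [mem_Icc]
      omega
    · intro n hn
      simp only [mem_Icc] at hn
      show n - 1 + 1 = n
      omega
    · intro x _
      show x + 1 - 1 = x
      omega
    · intro n hn
      simp only [mem_Icc] at hn
      refine Finset.sum_nbij' (fun m => n + m - 1) (fun y => y + 1 - n) ?_ ?_ ?_ ?_ ?_
      · intro m hm
        simp only [mem_Icc] at hm ⊢
        omega
      · intro y hy
        simp only [mem_Icc] at hy ⊢
        omega
      · intro m hm
        simp only [mem_Icc] at hm
        show n + m - 1 + 1 - n = m
        omega
      · intro y hy
        simp only [mem_Icc] at hy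
        show n + (y + 1 - n) - 1 = y
        omega
      · intro m hm
        simp only [mem_Icc] at hm
        have h1 : (n - 1) + 1 = n := by omega
        have h2 := hwin (n - 1) (n + m - 1) (by omega)
        rw [h1] at h2
        rw [h2]
  -- block boundaries
  set B1 := ((range (L+1)).filter (fun z => G z ≤ 1/8)).card with hB1def
  have hc1 : ∀ x : ℕ, x ≤ L → (x < B1 ↔ G x ≤ 1/8) :=
    fun x hx => char_lemma hGmono (1/8) hx
  have h12 : B1 ≤ ((range (L+1)).filter (fun z => G z ≤ 1/4)).card := by
    apply card_le_card
    intro z hz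
    simp only [mem_filter] at hz ⊢
    exact ⟨hz.1, by linarith [hz.2]⟩
  have h23 : ((range (L+1)).filter (fun z => G z ≤ 1/4)).card
      ≤ ((range (L+1)).filter (fun z => G z ≤ 3/8)).card := by
    apply card_le_card
    intro z hz
    simp only [mem_filter] at hz ⊢
    exact ⟨hz.1, by linarith [hz.2]⟩
  have h3M : ((range (L+1)).filter (fun z => G z ≤ 3/8)).card ≤ L + 1 := by
    calc ((range (L+1)).filter (fun z => G z ≤ 3/8)).card ≤ (range (L+1)).card :=
          card_filter_le _ _
      _ = L + 1 := card_range _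
  obtain ⟨n1, hn1⟩ := Nat.exists_eq_add_of_le h12
  obtain ⟨n2, hn2⟩ := Nat.exists_eq_add_of_le h23
  obtain ⟨n3, hn3⟩ := Nat.exists_eq_add_of_le h3M
  rw [hn1] at hn2
  rw [hn2] at hn3
  have hc2 : ∀ x : ℕ, x ≤ L → (x < B1 + n1 ↔ G x ≤ 1/4) := by
    intro x hx
    rw [← hn1]
    exact char_lemma hGmono (1/4) hx
  have hc3 : ∀ x : ℕ, x ≤ L → (x < B1 + n1 + n2 ↔ G x ≤ 3/8) := by
    intro x hx
    rw [← hn2]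
    exact char_lemma hGmono (3/8) hx
  have hLeq : L + 1 = B1 + n1 + n2 + n3 := by omega
  -- pointwise bound for the 1/4 sum
  have hpt4 : ∀ x ∈ range L, ∀ y ∈ Icc (x+1) L,
      (if 0 ≤ x ∧ y < 0 + (B1 + n1) then (1:ℝ) else 0)
        + (if B1 + n1 ≤ x ∧ y < B1 + n1 + (n2 + n3) then (1:ℝ) else 0)
        + (if B1 ≤ x ∧ x < B1 + n1 ∧ B1 + n1 ≤ y ∧ y < B1 + n1 + n2 then (1:ℝ) else 0)
      ≤ (if G y - G x ≤ 1/4 then (1:ℝ) else 0) := by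
    intro x hx y hy
    simp only [mem_range] at hx
    simp only [mem_Icc] at hy
    refine ind_le3 ?_ ?_ ?_ ?_ ?_ ?_
    · rintro ⟨-, hyB⟩
      have hGy : G y ≤ 1/4 := (hc2 y hy.2).1 (by omega)
      have hGx : 0 ≤ G x := hGnonneg x (by omega)
      linarith
    · rintro ⟨hxB, -⟩
      have hGx : ¬ G x ≤ 1/4 := by
        intro hcon
        have := (hc2 x (by omega)).2 hcon
        omega
      have hGy : G y ≤ 1/2 := le_trans (hGmono y L hy.2 le_rfl) hGL
      push_neg at hGx
      linarith
    · rintro ⟨hxB, -, -, hyB⟩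
      have hGx : ¬ G x ≤ 1/8 := by
        intro hcon
        have := (hc1 x (by omega)).2 hcon
        omega
      have hGy : G y ≤ 3/8 := (hc3 y hy.2).1 (by omega)
      push_neg at hGx
      linarith
    · rintro ⟨⟨-, hA⟩, hB, -⟩
      omega
    · rintro ⟨⟨-, hA⟩, -, -, hB, -⟩
      omega
    · rintro ⟨⟨hA, -⟩, -, hB, -, -⟩
      omega
  -- pointwise bound for the 1/8 sum
  have hpt8 : ∀ x ∈ range L, ∀ y ∈ Icc (x+1) L,
      (if 0 ≤ x ∧ y < 0 + B1 then (1:ℝ) else 0)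
        + (if B1 ≤ x ∧ y < B1 + n1 then (1:ℝ) else 0)
        + (if B1 + n1 ≤ x ∧ y < B1 + n1 + n2 then (1:ℝ) else 0)
        + (if B1 + n1 + n2 ≤ x ∧ y < B1 + n1 + n2 + n3 then (1:ℝ) else 0)
      ≤ (if G y - G x ≤ 1/8 then (1:ℝ) else 0) := by
    intro x hx y hy
    simp only [mem_range] at hx
    simp only [mem_Icc] at hy
    refine ind_le4 ?_ ?_ ?_ ?_ ?_ ?_ ?_ ?_ ?_ ?_
    · rintro ⟨-, hyB⟩
      have hGy : G y ≤ 1/8 := (hc1 y hy.2).1 (by omega)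
      have hGx : 0 ≤ G x := hGnonneg x (by omega)
      linarith
    · rintro ⟨hxB, hyB⟩
      have hGx : ¬ G x ≤ 1/8 := by
        intro hcon
        have := (hc1 x (by omega)).2 hcon
        omega
      have hGy : G y ≤ 1/4 := (hc2 y hy.2).1 (by omega)
      push_neg at hGx
      linarith
    · rintro ⟨hxB, hyB⟩
      have hGx : ¬ G x ≤ 1/4 := by
        intro hcon
        have := (hc2 x (by omega)).2 hcon
        omega
      have hGy : G y ≤ 3/8 := (hc3 y hy.2).1 (by omega)
      push_neg at hGx
      linarith
    · rintro ⟨hxB, -⟩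
      have hGx : ¬ G x ≤ 3/8 := by
        intro hcon
        have := (hc3 x (by omega)).2 hcon
        omega
      have hGy : G y ≤ 1/2 := le_trans (hGmono y L hy.2 le_rfl) hGL
      push_neg at hGx
      linarith
    · rintro ⟨⟨-, hA⟩, hB, -⟩
      omega
    · rintro ⟨⟨-, hA⟩, hB, -⟩
      omega
    · rintro ⟨⟨-, hA⟩, hB, -⟩
      omega
    · rintro ⟨⟨-, hA⟩, hB, -⟩
      omega
    · rintro ⟨⟨-, hA⟩, hB, -⟩
      omega
    · rintro ⟨⟨-, hA⟩, hB, -⟩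
      omega
  -- summed bounds
  have hmain4 : ∑ x ∈ range L, ∑ y ∈ Icc (x+1) L,
      ((if 0 ≤ x ∧ y < 0 + (B1 + n1) then (1:ℝ) else 0)
        + (if B1 + n1 ≤ x ∧ y < B1 + n1 + (n2 + n3) then (1:ℝ) else 0)
        + (if B1 ≤ x ∧ x < B1 + n1 ∧ B1 + n1 ≤ y ∧ y < B1 + n1 + n2 then (1:ℝ) else 0))
      ≤ ∑ x ∈ range L, ∑ y ∈ Icc (x+1) L, (if G y - G x ≤ 1/4 then (1:ℝ) else 0) :=
    Finset.sum_le_sum fun x hx => Finset.sum_le_sum fun y hy => hpt4 x hx y hy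
  have hmain8 : ∑ x ∈ range L, ∑ y ∈ Icc (x+1) L,
      ((if 0 ≤ x ∧ y < 0 + B1 then (1:ℝ) else 0)
        + (if B1 ≤ x ∧ y < B1 + n1 then (1:ℝ) else 0)
        + (if B1 + n1 ≤ x ∧ y < B1 + n1 + n2 then (1:ℝ) else 0)
        + (if B1 + n1 + n2 ≤ x ∧ y < B1 + n1 + n2 + n3 then (1:ℝ) else 0))
      ≤ ∑ x ∈ range L, ∑ y ∈ Icc (x+1) L, (if G y - G x ≤ 1/8 then (1:ℝ) else 0) :=
    Finset.sum_le_sum fun x hx => Finset.sum_le_sum fun y hy => hpt8 x hx y hy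
  simp only [Finset.sum_add_distrib] at hmain4 hmain8
  rw [pair_count L 0 (B1 + n1) (by omega), pair_count L (B1 + n1) (n2 + n3) (by omega)]
    at hmain4
  rw [pair_count L 0 B1 (by omega), pair_count L B1 n1 (by omega),
    pair_count L (B1 + n1) n2 (by omega), pair_count L (B1 + n1 + n2) n3 (by omega)]
    at hmain8
  have hcross := cross_count L B1 n1 n2 (by omega)
  -- final arithmetic
  rw [ge_iff_le, hre (1/4), hre (1/8)]
  have hK := block_ineq B1 n1 n2 n3 (by omega)
  have hch : 5 / 6 * ((L + 1).choose 2 : ℝ) - 5 / 6 * (L : ℝ)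
      = 5 * (((B1:ℝ) + n1 + n2 + n3) - 1) * (((B1:ℝ) + n1 + n2 + n3) - 2) / 12 := by
    rw [Nat.cast_choose_two]
    have hLc : ((L:ℝ) + 1) = (B1:ℝ) + n1 + n2 + n3 := by
      exact_mod_cast congrArg (fun t : ℕ => (t : ℝ)) hLeq
    push_cast at hLc ⊢
    nlinarith [hLc]
  rw [hch]
  push_cast at hmain4 hmain8 hcross hK
  linarith [hmain4, hmain8, hcross, hK]
end

section
/- Under the stated assumptions, liminf_{N→∞} (1/N)·∑_{I ∈ 𝓘^N} binom(|I|+1, 2) ≥ 1/2, where binom(k,2) = k(k−1)/2. -/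
/-!
If `0 < λ_j − λ_i ≤ 1/2` for some `1 ≤ i, j ≤ N`, then `i < j` and every gap `g_n` with
`i ≤ n < j` is at most `1/2`, so `[i, j − 1]` lies in a single maximal interval `I ∈ 𝓘^N` and
`i < j` are two points of `I ∪ {R(I) + 1}`, a set of `|I| + 1` integers. Hence the number of such
pairs is at most `∑_{I ∈ 𝓘^N} C(|I| + 1, 2)`, while by the Poisson pair correlations for
`(0, 1/2]` that number, divided by `N`, tends to `1/2`.
-/

open Finset Filter

open scoped Classical in
/-- The collection `𝓘^N` of maximal subintervals of `{1,…,N}` on which the gaps `g n` are at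
most `1/2`, encoded as the set of pairs `(p, q)` of endpoints, `1 ≤ p ≤ q ≤ N`. -/
noncomputable def maximalIntervals (g : ℕ → ℝ) (N : ℕ) : Finset (ℕ × ℕ) :=
  (Finset.Icc 1 N ×ˢ Finset.Icc 1 N).filter fun pq =>
    pq.1 ≤ pq.2 ∧ (∀ n ∈ Finset.Icc pq.1 pq.2, g n ≤ 1 / 2) ∧
      (pq.1 = 1 ∨ 1 / 2 < g (pq.1 - 1)) ∧ (pq.2 = N ∨ 1 / 2 < g (pq.2 + 1))

section Extension

variable {P : ℕ → Prop}

lemma exists_left_end_of_forall_Icc {i k : ℕ} (hi : 1 ≤ i) (h : ∀ n ∈ Icc i k, P n) :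
    ∃ p, 1 ≤ p ∧ p ≤ i ∧ (∀ n ∈ Icc p k, P n) ∧ (p = 1 ∨ ¬P (p - 1)) := by
  induction i, hi using Nat.le_induction with
  | base => exact ⟨1, le_rfl, le_rfl, h, Or.inl rfl⟩
  | succ i hi ih =>
    by_cases hPi : P i
    · obtain ⟨p, hp1, hpi, hpk, hp⟩ := ih fun n hn => by
        rcases (mem_Icc.1 hn).1.eq_or_lt with rfl | hlt
        · exact hPi
        · exact h n (mem_Icc.2 ⟨hlt, (mem_Icc.1 hn).2⟩)
      exact ⟨p, hp1, hpi.trans i.le_succ, hpk, hp⟩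
    · exact ⟨i + 1, by omega, le_rfl, h, Or.inr hPi⟩

lemma exists_right_end_of_forall_Icc {p j N : ℕ} (hjN : j ≤ N) (h : ∀ n ∈ Icc p j, P n) :
    ∃ q, j ≤ q ∧ q ≤ N ∧ (∀ n ∈ Icc p q, P n) ∧ (q = N ∨ ¬P (q + 1)) := by
  obtain ⟨d, rfl⟩ := Nat.exists_eq_add_of_le hjN
  clear hjN
  induction d generalizing j with
  | zero => exact ⟨j, le_rfl, le_rfl, h, Or.inl rfl⟩
  | succ d ih =>
    by_cases hPj : P (j + 1)
    · obtain ⟨q, hjq, hqN, hpq, hq⟩ := ih (j := j + 1) (fun n hn => by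
        rcases (mem_Icc.1 hn).2.eq_or_lt with rfl | hlt
        · exact hPj
        · exact h n (mem_Icc.2 ⟨(mem_Icc.1 hn).1, by omega⟩))
      exact ⟨q, by omega, by omega, hpq, by rwa [← add_assoc, add_right_comm]⟩
    · exact ⟨j, le_rfl, by omega, h, Or.inr hPj⟩

end Extension

lemma exists_mem_maximalIntervals {g : ℕ → ℝ} {N i k : ℕ} (hi : 1 ≤ i) (hik : i ≤ k)
    (hkN : k ≤ N) (hg : ∀ n ∈ Icc i k, g n ≤ 1 / 2) :
    ∃ pq ∈ maximalIntervals g N, pq.1 ≤ i ∧ k ≤ pq.2 := by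
  obtain ⟨p, hp1, hpi, hpk, hpL⟩ := exists_left_end_of_forall_Icc hi hg
  obtain ⟨q, hkq, hqN, hpq, hqR⟩ := exists_right_end_of_forall_Icc hkN hpk
  refine ⟨(p, q), ?_, hpi, hkq⟩
  simp only [not_le] at hpL hqR
  rw [maximalIntervals, mem_filter, mem_product, mem_Icc, mem_Icc]
  exact ⟨⟨⟨hp1, by omega⟩, by omega, hqN⟩, by omega, hpq, hpL, hqR⟩

lemma card_filter_lt_Icc_succ {p q : ℕ} (hpq : p ≤ q) :
    #{x ∈ Icc p (q + 1) ×ˢ Icc p (q + 1) | x.1 < x.2} = (q - p + 1 + 1).choose 2 := by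
  rw [card_product_filter_lt, Nat.card_Icc]
  congr 1
  omega

open scoped Classical in
lemma card_close_pairs_le_sum_choose {lam g : ℕ → ℝ} (hgdef : ∀ n, g n = lam (n + 1) - lam n)
    (hlam : StrictMonoOn lam (Set.Ici 1)) (N : ℕ) :
    #{x ∈ Icc 1 N ×ˢ Icc 1 N | x.1 ≠ x.2 ∧ lam x.2 - lam x.1 ∈ Set.Ioc 0 (1 / 2)} ≤
      ∑ pq ∈ maximalIntervals g N, (pq.2 - pq.1 + 1 + 1).choose 2 := by
  have hcover : {x ∈ Icc 1 N ×ˢ Icc 1 N | x.1 ≠ x.2 ∧ lam x.2 - lam x.1 ∈ Set.Ioc 0 (1 / 2)} ⊆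
      (maximalIntervals g N).biUnion fun pq =>
        {x ∈ Icc pq.1 (pq.2 + 1) ×ˢ Icc pq.1 (pq.2 + 1) | x.1 < x.2} := by
    rintro ⟨i, j⟩ hx
    simp only [mem_filter, mem_product, mem_Icc, Set.mem_Ioc] at hx
    obtain ⟨⟨⟨hi1, hiN⟩, hj1, hjN⟩, -, hpos, hle⟩ := hx
    have hij : i < j := (hlam.lt_iff_lt hi1 hj1).1 (by linarith)
    have hgaps : ∀ n ∈ Icc i (j - 1), g n ≤ 1 / 2 := fun n hn => by
      rw [mem_Icc] at hn
      have hin : lam i ≤ lam n := hlam.monotoneOn hi1 (Set.mem_Ici.2 (by omega)) hn.1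
      have hnj : lam (n + 1) ≤ lam j :=
        hlam.monotoneOn (Set.mem_Ici.2 (by omega)) hj1 (by omega)
      rw [hgdef]
      linarith
    obtain ⟨pq, hpq, hp, hq⟩ := exists_mem_maximalIntervals (N := N) (k := j - 1) hi1 (by omega) (by omega) hgaps
    simp only [mem_biUnion, mem_filter, mem_product, mem_Icc]
    exact ⟨pq, hpq, ⟨⟨hp, by omega⟩, by omega, by omega⟩, hij⟩
  calc _ ≤ _ := card_le_card hcover
    _ ≤ _ := card_biUnion_le
    _ = _ := sum_congr rfl fun pq hpq =>
      card_filter_lt_Icc_succ (mem_filter.1 hpq).2.1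

open scoped Classical in
theorem stmt_9_general (lam : ℕ → ℝ) (g : ℕ → ℝ) (hgdef : ∀ n, g n = lam (n + 1) - lam n)
    (hmono : ∀ n, 1 ≤ n → lam n < lam (n + 1))
    (hppc : ∀ I : Set ℝ, I.OrdConnected → Bornology.IsBounded I →
      Tendsto (fun N : ℕ =>
          (((Finset.Icc 1 N ×ˢ Finset.Icc 1 N).filter
            (fun p => p.1 ≠ p.2 ∧ lam p.2 - lam p.1 ∈ I)).card : ℝ) / N)
        atTop (nhds (MeasureTheory.volume I).toReal)) :
    Filter.liminf (fun N : ℕ =>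
        (((∑ pq ∈ maximalIntervals g N, ((pq.2 - pq.1 + 1 + 1).choose 2 : ℝ)) / N : ℝ) : EReal))
      atTop ≥ ((1 / 2 : ℝ) : EReal) := by
  have hlam : StrictMonoOn lam (Set.Ici 1) :=
    strictMonoOn_of_lt_add_one Set.ordConnected_Ici fun n _ hn _ => hmono n hn
  have hclose := hppc (Set.Ioc 0 (1 / 2)) Set.ordConnected_Ioc (Metric.isBounded_Ioc _ _)
  rw [Real.volume_Ioc, sub_zero, ENNReal.toReal_ofReal (by norm_num)] at hclose
  rw [ge_iff_le, ← (EReal.tendsto_coe.2 hclose).liminf_eq]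
  refine liminf_le_liminf (Eventually.of_forall fun N => EReal.coe_le_coe_iff.2 ?_)
  gcongr
  exact_mod_cast card_close_pairs_le_sum_choose hgdef hlam N

open scoped Classical in
/-- Let `(λ_n)` be strictly increasing with average gap `1` and Poisson pair correlations,
let `ε = 10⁻⁹`, and suppose `g n := λ_{n+1} − λ_n ≤ 3/2 + ε` for all `n ≥ 1`. Then
`liminf_{N→∞} (1/N)·∑_{I ∈ 𝓘^N} C(|I|+1, 2) ≥ 1/2`. -/
theorem stmt_9 (lam : ℕ → ℝ) (g : ℕ → ℝ) (hgdef : ∀ n, g n = lam (n + 1) - lam n)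
    (hmono : ∀ n, 1 ≤ n → lam n < lam (n + 1))
    (havg : Tendsto (fun N : ℕ => (∑ n ∈ Finset.Icc 1 N, g n) / N) atTop (nhds 1))
    (hppc : ∀ I : Set ℝ, I.OrdConnected → Bornology.IsBounded I →
      Tendsto (fun N : ℕ =>
          (((Finset.Icc 1 N ×ˢ Finset.Icc 1 N).filter
            (fun p => p.1 ≠ p.2 ∧ lam p.2 - lam p.1 ∈ I)).card : ℝ) / N)
        atTop (nhds (MeasureTheory.volume I).toReal))
    (ε : ℝ) (hε : ε = 1 / 10 ^ 9)
    (hgap : ∀ n, 1 ≤ n → g n ≤ 3 / 2 + ε) :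
    Filter.liminf (fun N : ℕ =>
        (((∑ pq ∈ maximalIntervals g N, ((pq.2 - pq.1 + 1 + 1).choose 2 : ℝ)) / N : ℝ) : EReal))
      atTop ≥ ((1 / 2 : ℝ) : EReal) :=
  stmt_9_general lam g hgdef hmono hppc
end

section
/- Let g_1, g_2, … be positive real numbers, let I be a finite interval of positive integers, and let J_1, …, J_s be consecutive subintervals (numbered from left to right) partitioning I, each with summ(J_k) ≤ 1/2. Let σ : {1,…,s} → ℕ be an injection (recording the order in which the subintervals were chosen), and assume: (i) summ(J_k) + summ(J_{k+1}) > 1/2 for every 1 ≤ k ≤ s−1; (ii) for every 1 ≤ k ≤ s−1, if σ(k) < σ(k+1) then summ(J_k) + g_{L(J_{k+1})} > 1/2, and if σ(k) > σ(k+1) then g_{R(J_k)} + summ(J_{k+1}) > 1/2. Call an index k ∈ {2,…,s−1} sandwiched if σ(k) > σ(k−1) and σ(k) > σ(k+1). Then for any n ≤ n' in I with g_n + g_{n+1} + ⋯ + g_{n'} ≤ 1/2, one of the following holds: (1) n and n' lie in the same J_k; (2) n ∈ J_k and n' ∈ J_{k+1} for some k; (3) n ∈ J_{k−1} and n' ∈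 J_{k+1} for some sandwiched k. -/
open Finset

/-- Let `g_1, g_2, …` be positive reals, and let `I = {p, …, q}` be partitioned (from left to
right) into consecutive nonempty subintervals `J_k = {e (k-1) + 1, …, e k}`, `1 ≤ k ≤ s`, each
with `summ(J_k) ≤ 1/2`, where `e 0 = p − 1 < e 1 < ⋯ < e s = q`. Let `σ` be injective on
`{1,…,s}` (recording the order in which the subintervals were chosen) and assume:
(i) `summ(J_k) + summ(J_{k+1}) > 1/2` for `1 ≤ k ≤ s−1`;
(ii) for `1 ≤ k ≤ s−1`: if `σ k < σ (k+1)` then `summ(J_k) + g (L(J_{k+1})) > 1/2`, and if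
`σ (k+1) < σ k` then `g (R(J_k)) + summ(J_{k+1}) > 1/2`.
Then for any `n ≤ n'` in `I` with `g n + ⋯ + g n' ≤ 1/2`, either (1) `n, n'` lie in the same
`J_k`; or (2) `n ∈ J_k`, `n' ∈ J_{k+1}` for some `k`; or (3) `n ∈ J_{k−1}`, `n' ∈ J_{k+1}` for
some sandwiched `k` (i.e. `2 ≤ k ≤ s−1` with `σ (k−1) < σ k` and `σ (k+1) < σ k`). -/
theorem stmt_11 (g : ℕ → ℝ) (hg : ∀ n, 1 ≤ n → 0 < g n)
    (p q : ℕ) (hp : 1 ≤ p) (hpq : p ≤ q)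
    (s : ℕ) (hs : 1 ≤ s) (e : ℕ → ℕ)
    (he0 : e 0 = p - 1) (hes : e s = q)
    (hemono : ∀ k < s, e k < e (k + 1))
    (σ : ℕ → ℕ) (hσ : Set.InjOn σ (Set.Icc 1 s))
    (hhalf : ∀ k, 1 ≤ k → k ≤ s →
      ∑ i ∈ Finset.Icc (e (k - 1) + 1) (e k), g i ≤ 1 / 2)
    (hi : ∀ k, 1 ≤ k → k ≤ s - 1 →
      1 / 2 < (∑ i ∈ Finset.Icc (e (k - 1) + 1) (e k), g i)
        + ∑ i ∈ Finset.Icc (e k + 1) (e (k + 1)), g i)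
    (hii : ∀ k, 1 ≤ k → k ≤ s - 1 →
      (σ k < σ (k + 1) →
        1 / 2 < (∑ i ∈ Finset.Icc (e (k - 1) + 1) (e k), g i) + g (e k + 1)) ∧
      (σ (k + 1) < σ k →
        1 / 2 < g (e k) + ∑ i ∈ Finset.Icc (e k + 1) (e (k + 1)), g i)) :
    ∀ n n', p ≤ n → n ≤ n' → n' ≤ q → (∑ i ∈ Finset.Icc n n', g i) ≤ 1 / 2 →
      (∃ k, 1 ≤ k ∧ k ≤ s ∧
        n ∈ Finset.Icc (e (k - 1) + 1) (e k) ∧ n' ∈ Finset.Icc (e (k - 1) + 1) (e k)) ∨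
      (∃ k, 1 ≤ k ∧ k + 1 ≤ s ∧
        n ∈ Finset.Icc (e (k - 1) + 1) (e k) ∧ n' ∈ Finset.Icc (e k + 1) (e (k + 1))) ∨
      (∃ k, 2 ≤ k ∧ k ≤ s - 1 ∧ σ (k - 1) < σ k ∧ σ (k + 1) < σ k ∧
        n ∈ Finset.Icc (e (k - 2) + 1) (e (k - 1)) ∧
        n' ∈ Finset.Icc (e k + 1) (e (k + 1))) := by
  classical
  have emono : ∀ j, j ≤ s → ∀ i, i ≤ j → e i ≤ e j := by
    intro j
    induction j with
    | zero =>
      intro _ i hi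
      have : i = 0 := Nat.le_zero.mp hi
      subst this; exact le_rfl
    | succ j ih =>
      intro hjs i hij
      rcases Nat.eq_or_lt_of_le hij with h | h
      · subst h; exact le_rfl
      · exact (ih (by omega) i (by omega)).trans (hemono j (by omega)).le
  have block : ∀ m, p ≤ m → m ≤ q → ∃ k, 1 ≤ k ∧ k ≤ s ∧ e (k - 1) < m ∧ m ≤ e k := by
    intro m hm hmq
    have hPs : ∃ k, m ≤ e k := ⟨s, hes ▸ hmq⟩
    have hks : Nat.find hPs ≤ s := Nat.find_le (hes ▸ hmq)
    have hmk : m ≤ e (Nat.find hPs) := Nat.find_spec hPs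
    have hk1 : 1 ≤ Nat.find hPs := by
      by_contra h
      have h0 : Nat.find hPs = 0 := by omega
      rw [h0, he0] at hmk; omega
    have hlt : e (Nat.find hPs - 1) < m := by
      by_contra h
      push_neg at h
      exact Nat.find_min hPs (show Nat.find hPs - 1 < Nat.find hPs by omega) h
    exact ⟨Nat.find hPs, hk1, hks, hlt, hmk⟩
  intro n n' hn hnn' hn'q hsum
  have hpos : ∀ S : Finset ℕ, S ⊆ Finset.Icc n n' → ∑ i ∈ S, g i ≤ 1 / 2 := by
    intro S hS
    refine le_trans (Finset.sum_le_sum_of_subset_of_nonneg hS ?_) hsum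
    intro i hi _
    have h := Finset.mem_Icc.mp hi
    exact (hg i (by omega)).le
  obtain ⟨a, ha1, has, hane, hnea⟩ := block n hn (le_trans hnn' hn'q)
  obtain ⟨b, hb1, hbs, hbne, hneb⟩ := block n' (le_trans hn hnn') hn'q
  have hab : a ≤ b := by
    by_contra h
    push_neg at h
    have : e b ≤ e (a - 1) := emono (a - 1) (by omega) b (by omega)
    omega
  rcases (by omega : a = b ∨ a + 1 = b ∨ a + 2 ≤ b) with heq | heq | hb2
  · subst heq
    exact Or.inl ⟨a, ha1, has, Finset.mem_Icc.mpr ⟨by omega, hnea⟩,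
      Finset.mem_Icc.mpr ⟨by omega, hneb⟩⟩
  · subst heq
    have hbne' : e a < n' := hbne
    exact Or.inr (Or.inl ⟨a, ha1, by omega, Finset.mem_Icc.mpr ⟨by omega, hnea⟩,
      Finset.mem_Icc.mpr ⟨by omega, hneb⟩⟩)
  · have hbne' : e (b - 1) < n' := hbne
    have hea1 : e a < e (a + 1) := hemono a (by omega)
    rcases (by omega : a + 3 ≤ b ∨ a + 2 = b) with hb3 | heq
    · exfalso
      have hea2 : e (a + 1) < e (a + 2) := hemono (a + 1) (by omega)
      have hsub : Finset.Ioc (e a) (e (a + 2)) ⊆ Finset.Icc n n' := by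
        intro i hi
        rw [Finset.mem_Ioc] at hi
        rw [Finset.mem_Icc]
        have h1 : e (a + 2) ≤ e (b - 1) := emono (b - 1) (by omega) (a + 2) (by omega)
        omega
      have hun : (∑ i ∈ Finset.Ioc (e a) (e (a + 1)), g i)
          + ∑ i ∈ Finset.Ioc (e (a + 1)) (e (a + 2)), g i ≤ 1 / 2 := by
        rw [Finset.sum_Ioc_consecutive _ hea1.le hea2.le]
        exact hpos _ hsub
      have hi' : 1 / 2 < (∑ i ∈ Finset.Icc (e a + 1) (e (a + 1)), g i)
          + ∑ i ∈ Finset.Icc (e (a + 1) + 1) (e (a + 2)), g i :=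
        hi (a + 1) (by omega) (by omega)
      rw [Finset.Icc_add_one_left_eq_Ioc, Finset.Icc_add_one_left_eq_Ioc] at hi'
      linarith
    · -- b = a + 2, set k = a + 1
      subst heq
      have hbne'' : e (a + 1) < n' := hbne
      have hneb' : n' ≤ e (a + 2) := hneb
      have hS1 : g (e a) + ∑ i ∈ Finset.Ioc (e a) (e (a + 1)), g i ≤ 1 / 2 := by
        rw [← Finset.sum_insert (by simp)]
        refine hpos _ ?_
        intro i hi
        simp only [Finset.mem_insert, Finset.mem_Ioc] at hi
        rw [Finset.mem_Icc]
        rcases hi with rfl | hi <;> omega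
      have hS2 : g (e (a + 1) + 1) + ∑ i ∈ Finset.Ioc (e a) (e (a + 1)), g i ≤ 1 / 2 := by
        rw [← Finset.sum_insert (by
          simp only [Finset.mem_Ioc, not_and, not_le]; omega)]
        refine hpos _ ?_
        intro i hi
        simp only [Finset.mem_insert, Finset.mem_Ioc] at hi
        rw [Finset.mem_Icc]
        rcases hi with rfl | hi <;> omega
      have h12 : σ (a + 2) < σ (a + 1) := by
        rcases lt_trichotomy (σ (a + 1)) (σ (a + 2)) with h | h | h
        · exfalso
          have h2 : 1 / 2 < (∑ i ∈ Finset.Icc (e a + 1) (e (a + 1)), g i)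
              + g (e (a + 1) + 1) := (hii (a + 1) (by omega) (by omega)).1 h
          rw [Finset.Icc_add_one_left_eq_Ioc] at h2
          linarith
        · exact absurd (hσ (by constructor <;> omega) (by constructor <;> omega) h)
            (by omega)
        · exact h
      have h01 : σ a < σ (a + 1) := by
        rcases lt_trichotomy (σ a) (σ (a + 1)) with h | h | h
        · exact h
        · exact absurd (hσ (by constructor <;> omega) (by constructor <;> omega) h)
            (by omega)
        · exfalso
          have h2 : 1 / 2 < g (e a)
              + ∑ i ∈ Finset.Icc (e a + 1) (e (a + 1)), g i :=
            (hii a (by omega) (by omega)).2 h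
          rw [Finset.Icc_add_one_left_eq_Ioc] at h2
          linarith
      refine Or.inr (Or.inr ⟨a + 1, by omega, by omega, h01, h12, ?_, ?_⟩)
      · have h1 : e (a + 1 - 2) = e (a - 1) := rfl
        have h2 : e (a + 1 - 1) = e a := rfl
        rw [Finset.mem_Icc, h1, h2]
        omega
      · have h3 : e (a + 1 + 1) = e (a + 2) := rfl
        rw [Finset.mem_Icc, h3]
        omega
end

section
/- Let g_1, g_2, … be positive real numbers, and let J₁ = {p, …, q}, J₂ = {q+1, …, t}, J₃ = {t+1, …, r} be three consecutive finite intervals of positive integers with |J₂| ≤ |J₃| ≤ |J₁|. Assume that for all x ∈ J₁ and y ∈ J₃ with y − x + 1 > |J₁|, one has g_x + g_{x+1} + ⋯ + g_y > 1/2. Then #{(x, y) ∈ J₁ × J₃ : g_x + g_{x+1} + ⋯ + g_y > 1/2} ≥ (1/2)·|J₃|². -/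
/-!
Every pair `(p + i, t + 1 + j)` with `i ≤ j < |J₃|` lies in `J₁ × J₃` (as `|J₃| ≤ |J₁|`) and spans
more than `|J₁|` indices (as `J₂` is nonempty), so the hypothesis applies to it. These pairs form a
triangle with `|J₃| (|J₃| + 1) / 2 ≥ |J₃|² / 2` elements.
-/

open Finset

theorem card_sigma_range_succ_mul_two (m : ℕ) :
    #((range m).sigma fun j => range (j + 1)) * 2 = m * (m + 1) := by
  rw [card_sigma]
  induction m with
  | zero => simp
  | succ m ih => rw [sum_range_succ, add_mul, ih, card_range]; ring

theorem mul_succ_le_two_mul_card_of_triangle_subset {s : Finset (ℕ × ℕ)} {a b m : ℕ}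
    (hs : ∀ i j, i ≤ j → j < m → (a + i, b + j) ∈ s) : m * (m + 1) ≤ 2 * #s := by
  have hinj : #((range m).sigma fun j => range (j + 1)) ≤ #s := by
    refine card_le_card_of_injOn (fun ji => (a + ji.2, b + ji.1)) ?_ ?_
    · rintro ⟨j, i⟩ hji
      simp only [coe_sigma, Set.mem_sigma_iff, coe_range, Set.mem_Iio] at hji
      exact hs i j (by omega) hji.1
    · rintro ⟨j, i⟩ - ⟨j', i'⟩ - hji
      simp only [Prod.mk.injEq, add_right_inj] at hji
      rw [hji.1, hji.2]
  rw [← card_sigma_range_succ_mul_two]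
  omega

open scoped Classical in
theorem stmt_13_general (g : ℕ → ℝ)
    (p q t r : ℕ) (hqt : q < t)
    (hsize31 : r - t ≤ q + 1 - p)
    (h : ∀ x ∈ Finset.Icc p q, ∀ y ∈ Finset.Icc (t + 1) r,
      q + 1 - p < y - x + 1 → 1 / 2 < ∑ i ∈ Finset.Icc x y, g i) :
    1 / 2 * ((r - t : ℕ) : ℝ) ^ 2 ≤
      (((Finset.Icc p q ×ˢ Finset.Icc (t + 1) r).filter
        (fun xy => 1 / 2 < ∑ i ∈ Finset.Icc xy.1 xy.2, g i)).card : ℝ) := by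
  set S := (Icc p q ×ˢ Icc (t + 1) r).filter fun xy => 1 / 2 < ∑ i ∈ Icc xy.1 xy.2, g i
  have htriangle : (r - t) * (r - t + 1) ≤ 2 * #S :=
    mul_succ_le_two_mul_card_of_triangle_subset (a := p) (b := t + 1) fun i j hij hj => by
      have hx : p + i ∈ Icc p q := mem_Icc.2 ⟨by omega, by omega⟩
      have hy : t + 1 + j ∈ Icc (t + 1) r := mem_Icc.2 ⟨by omega, by omega⟩
      exact mem_filter.2 ⟨mem_product.2 ⟨hx, hy⟩, h _ hx _ hy (by omega)⟩
  have hsq : (r - t) ^ 2 ≤ 2 * #S := by nlinarith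
  have hsq_real : ((r - t : ℕ) : ℝ) ^ 2 ≤ 2 * #S := by exact_mod_cast hsq
  linarith

open scoped Classical in
/-- Let `g_1, g_2, …` be positive reals and `J₁ = {p,…,q}`, `J₂ = {q+1,…,t}`, `J₃ = {t+1,…,r}`
three consecutive intervals of positive integers with `|J₂| ≤ |J₃| ≤ |J₁|`. If
`g x + ⋯ + g y > 1/2` whenever `x ∈ J₁`, `y ∈ J₃` and `y − x + 1 > |J₁|`, then
`#{(x,y) ∈ J₁ × J₃ : g x + ⋯ + g y > 1/2} ≥ (1/2)·|J₃|²`. -/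
theorem stmt_13 (g : ℕ → ℝ) (hg : ∀ n, 1 ≤ n → 0 < g n)
    (p q t r : ℕ) (hp : 1 ≤ p) (hpq : p ≤ q) (hqt : q < t) (htr : t < r)
    (hsize23 : t - q ≤ r - t) (hsize31 : r - t ≤ q + 1 - p)
    (h : ∀ x ∈ Finset.Icc p q, ∀ y ∈ Finset.Icc (t + 1) r,
      q + 1 - p < y - x + 1 → 1 / 2 < ∑ i ∈ Finset.Icc x y, g i) :
    1 / 2 * ((r - t : ℕ) : ℝ) ^ 2 ≤
      (((Finset.Icc p q ×ˢ Finset.Icc (t + 1) r).filter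
        (fun xy => 1 / 2 < ∑ i ∈ Finset.Icc xy.1 xy.2, g i)).card : ℝ) :=
  stmt_13_general g p q t r hqt hsize31 h
end
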